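/- arXiv:math/0406146 — 7 statements merged into one kernel-verified Lean document; each statement's English description precedes it below -/
import Mathlib

section
/- Let ι be a countable type, w : ι → ℝ with w i > 0 for every i, and a : ι → ℝ with a i ≥ 0 for every i. Assume 0 < ∑_i a i < ∞ and that F_n := ∑_i (w i)^{2n} · a i is finite for every natural number n. For natural numbers r < n define κ_{n,r} = (F_n / F_r)^{1/(2(n−r))}. Then for all natural numbers r and n with r + 1 < n, one has κ_{n,r} ≤ κ_{n,r+1}. -/
open scoped BigOperators

/-- the generalized moment ratios `κ n r = (F n / F r) ^ (1/(2(n-r)))`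
satisfy `κ n r ≤ κ n (r+1)` whenever `r + 1 < n`. -/
theorem kappa_nr_monotone_in_r
    {ι : Type*} [Countable ι] (w a : ι → ℝ)
    (hw : ∀ i, 0 < w i) (ha : ∀ i, 0 ≤ a i)
    (hsum : Summable a) (hpos : 0 < ∑' i, a i)
    (hF : ∀ n : ℕ, Summable fun i => w i ^ (2 * n) * a i)
    (F : ℕ → ℝ) (hFdef : ∀ n : ℕ, F n = ∑' i, w i ^ (2 * n) * a i)
    (κ : ℕ → ℕ → ℝ)
    (hκ : ∀ n r : ℕ, r < n → κ n r = (F n / F r) ^ (1 / (2 * ((n : ℝ) - (r : ℝ))))) :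
    ∀ r n : ℕ, r + 1 < n → κ n r ≤ κ n (r + 1) := by
  -- some coefficient is positive
  obtain ⟨i0, hi0⟩ : ∃ i, 0 < a i := by
    by_contra h
    push_neg at h
    have hz : a = 0 := funext fun i => le_antisymm (h i) (ha i)
    rw [hz] at hpos
    simp at hpos
  -- positivity of the moments
  have hFpos : ∀ m, 0 < F m := by
    intro m
    rw [hFdef]
    refine lt_of_lt_of_le ?_ (Summable.le_tsum (hF m) i0 fun j _ => ?_)
    · have := hw i0; positivity
    · have := hw j; have := ha j; positivity
  -- Cauchy–Schwarz: F (m+1)^2 ≤ F m * F (m+2)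
  have key : ∀ m, F (m + 1) ^ 2 ≤ F m * F (m + 2) := by
    intro m
    have hsq : ∀ (k : ℕ) (i : ι), (w i ^ k * Real.sqrt (a i)) ^ 2 = w i ^ (2 * k) * a i := by
      intro k i
      rw [mul_pow, Real.sq_sqrt (ha i), ← pow_mul, Nat.mul_comm k 2]
    have hb : ∀ s : Finset ι,
        ∑ i ∈ s, w i ^ (2 * (m + 1)) * a i ≤ Real.sqrt (F m) * Real.sqrt (F (m + 2)) := by
      intro s
      have step1 : ∑ i ∈ s, w i ^ (2 * (m + 1)) * a i
          = ∑ i ∈ s, (w i ^ m * Real.sqrt (a i)) * (w i ^ (m + 2) * Real.sqrt (a i)) := by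
        refine Finset.sum_congr rfl fun i _ => ?_
        have h := Real.mul_self_sqrt (ha i)
        rw [show 2 * (m + 1) = m + (m + 2) by ring, pow_add]
        linear_combination (-(w i ^ m * w i ^ (m + 2))) * h
      have step2 := Real.sum_mul_le_sqrt_mul_sqrt s
        (fun i => w i ^ m * Real.sqrt (a i)) (fun i => w i ^ (m + 2) * Real.sqrt (a i))
      have h3 : ∑ i ∈ s, (w i ^ m * Real.sqrt (a i)) ^ 2 ≤ F m := by
        rw [hFdef]
        calc ∑ i ∈ s, (w i ^ m * Real.sqrt (a i)) ^ 2
            = ∑ i ∈ s, w i ^ (2 * m) * a i := Finset.sum_congr rfl fun i _ => hsq m i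
          _ ≤ ∑' i, w i ^ (2 * m) * a i :=
              Summable.sum_le_tsum s (fun j _ => by have := hw j; have := ha j; positivity) (hF m)
      have h4 : ∑ i ∈ s, (w i ^ (m + 2) * Real.sqrt (a i)) ^ 2 ≤ F (m + 2) := by
        rw [hFdef]
        calc ∑ i ∈ s, (w i ^ (m + 2) * Real.sqrt (a i)) ^ 2
            = ∑ i ∈ s, w i ^ (2 * (m + 2)) * a i := Finset.sum_congr rfl fun i _ => hsq (m + 2) i
          _ ≤ ∑' i, w i ^ (2 * (m + 2)) * a i :=
              Summable.sum_le_tsum s (fun j _ => by have := hw j; have := ha j; positivity) (hF (m + 2))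
      calc ∑ i ∈ s, w i ^ (2 * (m + 1)) * a i
          = ∑ i ∈ s, (w i ^ m * Real.sqrt (a i)) * (w i ^ (m + 2) * Real.sqrt (a i)) := step1
        _ ≤ _ := step2
        _ ≤ Real.sqrt (F m) * Real.sqrt (F (m + 2)) :=
            mul_le_mul (Real.sqrt_le_sqrt h3) (Real.sqrt_le_sqrt h4)
              (Real.sqrt_nonneg _) (Real.sqrt_nonneg _)
    have hle : F (m + 1) ≤ Real.sqrt (F m) * Real.sqrt (F (m + 2)) := by
      rw [hFdef]
      exact Summable.tsum_le_of_sum_le (hF (m + 1)) hb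
    have h0 : 0 ≤ F (m + 1) := (hFpos (m + 1)).le
    calc F (m + 1) ^ 2 ≤ (Real.sqrt (F m) * Real.sqrt (F (m + 2))) ^ 2 :=
          pow_le_pow_left₀ h0 hle 2
      _ = F m * F (m + 2) := by
          rw [mul_pow, Real.sq_sqrt (hFpos m).le, Real.sq_sqrt (hFpos (m + 2)).le]
  -- log-convexity
  have hconv : ∀ m, 2 * Real.log (F (m + 1)) ≤ Real.log (F m) + Real.log (F (m + 2)) := by
    intro m
    have := Real.log_le_log (pow_pos (hFpos (m + 1)) 2) (key m)
    rwa [Real.log_pow, Real.log_mul (hFpos m).ne' (hFpos (m + 2)).ne',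
      Nat.cast_ofNat] at this
  have cmono : Monotone (fun m => Real.log (F (m + 1)) - Real.log (F m)) := by
    apply monotone_nat_of_le_succ
    intro m
    have := hconv m
    show Real.log (F (m + 1)) - Real.log (F m) ≤ Real.log (F (m + 2)) - Real.log (F (m + 1))
    linarith
  -- chord inequality
  have chord : ∀ r n : ℕ, r < n →
      ((n : ℝ) - r) * (Real.log (F (r + 1)) - Real.log (F r))
        ≤ Real.log (F n) - Real.log (F r) := by
    intro r n hrn
    have htel : ∑ k ∈ Finset.range (n - r),
        (Real.log (F (r + (k + 1))) - Real.log (F (r + k)))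
          = Real.log (F n) - Real.log (F r) := by
      have := Finset.sum_range_sub (f := fun k => Real.log (F (r + k))) (n - r)
      simpa [Nat.add_sub_cancel' hrn.le] using this
    have hsum' : (n - r : ℕ) • (Real.log (F (r + 1)) - Real.log (F r))
        ≤ ∑ k ∈ Finset.range (n - r),
            (Real.log (F (r + (k + 1))) - Real.log (F (r + k))) := by
      have h := Finset.card_nsmul_le_sum (Finset.range (n - r))
        (fun k => Real.log (F (r + (k + 1))) - Real.log (F (r + k)))
        (Real.log (F (r + 1)) - Real.log (F r))
        (fun k _ => by simpa [add_assoc] using cmono (Nat.le_add_right r k))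
      simpa using h
    rw [htel] at hsum'
    have hcast : ((n - r : ℕ) : ℝ) = (n : ℝ) - r := by
      rw [Nat.cast_sub hrn.le]
    calc ((n : ℝ) - r) * (Real.log (F (r + 1)) - Real.log (F r))
        = (n - r : ℕ) • (Real.log (F (r + 1)) - Real.log (F r)) := by
          rw [nsmul_eq_mul, hcast]
      _ ≤ _ := hsum'
  -- arithmetic helper
  have arith : ∀ X Y d : ℝ, 2 ≤ d → d * (X - Y) ≤ X →
      X * (1 / (2 * d)) ≤ Y * (1 / (2 * (d - 1))) := by
    intro X Y d hd h
    rw [mul_one_div, mul_one_div, div_le_div_iff₀ (by linarith) (by linarith)]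
    nlinarith
  -- finish
  intro r n hrn
  have hrn' : r < n := by omega
  rw [hκ n r hrn', hκ n (r + 1) (by omega)]
  have hd1 : 0 < F n / F r := div_pos (hFpos n) (hFpos r)
  have hd2 : 0 < F n / F (r + 1) := div_pos (hFpos n) (hFpos (r + 1))
  rw [Real.rpow_def_of_pos hd1, Real.rpow_def_of_pos hd2]
  apply Real.exp_le_exp.mpr
  rw [Real.log_div (hFpos n).ne' (hFpos r).ne',
    Real.log_div (hFpos n).ne' (hFpos (r + 1)).ne']
  have hd : (2 : ℝ) ≤ (n : ℝ) - r := by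
    have : ((r : ℝ) + 2) ≤ (n : ℝ) := by exact_mod_cast (show r + 2 ≤ n by omega)
    linarith
  have hch := chord r n hrn'
  have hmain := arith (Real.log (F n) - Real.log (F r))
    (Real.log (F n) - Real.log (F (r + 1))) ((n : ℝ) - r) hd (by linarith)
  have e : (n : ℝ) - ((r + 1 : ℕ) : ℝ) = (n : ℝ) - r - 1 := by push_cast; ring
  rw [e]
  exact hmain
end

section
/- Let ι be a countable type, w : ι → ℝ with w i > 0 for every i, and a : ι → ℝ with a i ≥ 0 for every i. Assume that F_n := ∑_i (w i)^{2n} · a i is finite for every natural number n. Then for all natural numbers N, p, q with p ≤ N and q ≥ 1, one has the interpolation (log-convexity) inequality F_N^{p+q} ≤ F_{N−p}^q · F_{N+q}^p. -/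
/-!
Put `x i = w i ^ 2`. The term `x i ^ N * a i` is the weighted geometric mean, with weights
`q / (p + q)` and `p / (p + q)`, of the terms `x i ^ (N - p) * a i` and `x i ^ (N + q) * a i`,
so Hölder's inequality for the conjugate exponents `(p + q) / q` and `(p + q) / p` bounds `F N`
by `F (N - p) ^ (q / (p + q)) * F (N + q) ^ (p / (p + q))`.
-/

namespace Real

variable {ι : Type*}

theorem tsum_rpow_mul_rpow_le {u v : ι → ℝ} {a b : ℝ} (ha : 0 < a) (hb : 0 < b)
    (hab : a + b = 1) (hu : ∀ i, 0 ≤ u i) (hv : ∀ i, 0 ≤ v i) (hus : Summable u)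
    (hvs : Summable v) :
    ∑' i, u i ^ a * v i ^ b ≤ (∑' i, u i) ^ a * (∑' i, v i) ^ b := by
  have hinv : ∀ {c : ℝ}, 0 < c → ∀ {x : ℝ}, 0 ≤ x → (x ^ c) ^ c⁻¹ = x := fun hc _ hx =>
    rpow_rpow_inv hx hc.ne'
  have holder := inner_le_Lp_mul_Lq_tsum_of_nonneg (HolderConjugate.inv_inv ha hb hab)
    (fun i => rpow_nonneg (hu i) a) (fun i => rpow_nonneg (hv i) b)
    (by simpa only [hinv ha (hu _)] using hus) (by simpa only [hinv hb (hv _)] using hvs)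
  simpa only [hinv ha (hu _), hinv hb (hv _), one_div, inv_inv] using holder

theorem tsum_pow_add_le_of_pow_add_eq {t u v : ι → ℝ} {p q : ℕ} (hp : 0 < p)
    (hq : 0 < q) (ht : ∀ i, 0 ≤ t i) (hu : ∀ i, 0 ≤ u i) (hv : ∀ i, 0 ≤ v i)
    (hus : Summable u) (hvs : Summable v) (h : ∀ i, t i ^ (p + q) = u i ^ q * v i ^ p) :
    (∑' i, t i) ^ (p + q) ≤ (∑' i, u i) ^ q * (∑' i, v i) ^ p := by
  have hpq : (p + q : ℝ) ≠ 0 := by positivity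
  have ht_eq : ∀ i, t i = u i ^ (q / (p + q) : ℝ) * v i ^ (p / (p + q) : ℝ) := fun i => by
    rw [← pow_rpow_inv_natCast (ht i) (by omega : p + q ≠ 0), h i,
      mul_rpow (pow_nonneg (hu i) _) (pow_nonneg (hv i) _), ← rpow_natCast_mul (hu i),
      ← rpow_natCast_mul (hv i)]
    push_cast
    rfl
  have holder : ∑' i, t i ≤ (∑' i, u i) ^ (q / (p + q) : ℝ) * (∑' i, v i) ^ (p / (p + q) : ℝ) := by
    simp_rw [ht_eq]
    exact tsum_rpow_mul_rpow_le (by positivity) (by positivity) (by field_simp; ring) hu hv hus hvs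
  calc (∑' i, t i) ^ (p + q)
      ≤ ((∑' i, u i) ^ (q / (p + q) : ℝ) * (∑' i, v i) ^ (p / (p + q) : ℝ)) ^ (p + q) :=
        pow_le_pow_left₀ (tsum_nonneg ht) holder _
    _ = (∑' i, u i) ^ q * (∑' i, v i) ^ p := by
        rw [mul_pow, ← rpow_mul_natCast (tsum_nonneg hu), ← rpow_mul_natCast (tsum_nonneg hv)]
        push_cast
        rw [div_mul_cancel₀ _ hpq, div_mul_cancel₀ _ hpq, rpow_natCast, rpow_natCast]

theorem pow_tsum_pow_mul_le {x a : ι → ℝ} (hx : ∀ i, 0 ≤ x i)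
    (ha : ∀ i, 0 ≤ a i) (j p q : ℕ) (hj : Summable fun i => x i ^ j * a i)
    (hjpq : Summable fun i => x i ^ (j + p + q) * a i) :
    (∑' i, x i ^ (j + p) * a i) ^ (p + q) ≤
      (∑' i, x i ^ j * a i) ^ q * (∑' i, x i ^ (j + p + q) * a i) ^ p := by
  rcases p.eq_zero_or_pos with rfl | hp
  · simp
  rcases q.eq_zero_or_pos with rfl | hq
  · simp
  have hterm (n : ℕ) (i : ι) : 0 ≤ x i ^ n * a i := mul_nonneg (pow_nonneg (hx i) n) (ha i)
  exact tsum_pow_add_le_of_pow_add_eq hp hq (hterm _) (hterm _) (hterm _) hj hjpq fun i => by ring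

end Real

theorem moment_interpolation_general
    {ι : Type*} (w a : ι → ℝ)
    (ha : ∀ i, 0 ≤ a i)
    (hF : ∀ n : ℕ, Summable fun i => w i ^ (2 * n) * a i)
    (F : ℕ → ℝ) (hFdef : ∀ n : ℕ, F n = ∑' i, w i ^ (2 * n) * a i) :
    ∀ N p q : ℕ, p ≤ N → 1 ≤ q →
      F N ^ (p + q) ≤ F (N - p) ^ q * F (N + q) ^ p := by
  intro N p q hpN _
  obtain ⟨j, rfl⟩ := Nat.exists_eq_add_of_le' hpN
  simp_rw [hFdef, Nat.add_sub_cancel, pow_mul] at hF ⊢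
  exact Real.pow_tsum_pow_mul_le (fun i => sq_nonneg (w i)) ha j p q (hF j) (hF _)

/-- the moment interpolation (log-convexity) inequality
`F N ^ (p+q) ≤ F (N-p) ^ q * F (N+q) ^ p` for the moments
`F n = ∑' i, (w i)^(2n) * a i`. -/
theorem moment_interpolation
    {ι : Type*} [Countable ι] (w a : ι → ℝ)
    (hw : ∀ i, 0 < w i) (ha : ∀ i, 0 ≤ a i)
    (hF : ∀ n : ℕ, Summable fun i => w i ^ (2 * n) * a i)
    (F : ℕ → ℝ) (hFdef : ∀ n : ℕ, F n = ∑' i, w i ^ (2 * n) * a i) :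
    ∀ N p q : ℕ, p ≤ N → 1 ≤ q →
      F N ^ (p + q) ≤ F (N - p) ^ q * F (N + q) ^ p :=
  moment_interpolation_general w a ha hF F hFdef
end

section
/- Let T > 0, L > 0, R > 0, c > 0, λ ∈ ℝ, 0 < μ < 1, and set α = 1 − μ. Let f, g : [0,T] → ℝ be measurable with 1/L ≤ f(t) ≤ g(t) for almost every t ∈ [0,T], assume f, f^α and (g/f)^{α/μ} are integrable on [0,T], and assume the average bound (1/T)∫₀ᵀ f ≤ c·L^{−1}·R^{λ}. Then (1/T)∫₀ᵀ (c·g(t)/f(t))^{(1−μ)/μ} dt ≥ (1/T)∫₀ᵀ ((L·f(t))^{μ}·R^{−λ})^{(1−μ)/μ} dt. -/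
/-!
Write `β = (1 - μ) / μ ≥ 1 - μ`. Since `f ≥ 1/L`, the average bound on `f` forces
`c R^λ ≥ 1`. On the left, `g / f ≥ 1` gives the pointwise bound `(c g / f)^β ≥ c^β`. On the
right, the integrand is `L^(1-μ) R^(-λβ) f^(1-μ)`, and Jensen's inequality for the concave power
`1 - μ` bounds its average by `R^(-λβ) (c R^λ)^(1-μ) ≤ R^(-λβ) (c R^λ)^β = c^β`.
-/

open MeasureTheory

section Average

variable {X : Type*} [MeasurableSpace X] {ν : Measure X}

theorem average_const_mul (r : ℝ) (f : X → ℝ) :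
    ⨍ x, r * f x ∂ν = r * ⨍ x, f x ∂ν := by
  simp only [average_eq, smul_eq_mul, integral_const_mul]
  ring

variable [IsFiniteMeasure ν] [NeZero ν]

theorem le_average_of_ae_le {f : X → ℝ} {a : ℝ} (hf : Integrable f ν)
    (h : ∀ᵐ x ∂ν, a ≤ f x) : a ≤ ⨍ x, f x ∂ν :=
  calc a = ⨍ _, a ∂ν := (average_const ν a).symm
    _ ≤ ⨍ x, f x ∂ν := by
      simp only [average_eq, smul_eq_mul]
      exact mul_le_mul_of_nonneg_left (integral_mono_ae (integrable_const a) hf h)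
        (by positivity)

theorem average_rpow_le_rpow_average {f : X → ℝ} {p : ℝ} (hp₀ : 0 ≤ p) (hp₁ : p ≤ 1)
    (hf₀ : ∀ᵐ x ∂ν, 0 ≤ f x) (hf : Integrable f ν)
    (hfp : Integrable (fun x => f x ^ p) ν) : ⨍ x, f x ^ p ∂ν ≤ (⨍ x, f x ∂ν) ^ p :=
  (Real.concaveOn_rpow hp₀ hp₁).le_map_average
    (Real.continuous_rpow_const hp₀).continuousOn isClosed_Ici hf₀ hf hfp

theorem rpow_le_average_mul_div_rpow {f g : X → ℝ} {c β : ℝ} (hc : 0 ≤ c)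
    (hβ : 0 ≤ β) (hfg : ∀ᵐ x ∂ν, 0 < f x ∧ f x ≤ g x)
    (hint : Integrable (fun x => (g x / f x) ^ β) ν) :
    c ^ β ≤ ⨍ x, (c * g x / f x) ^ β ∂ν := by
  have hsplit : ∀ᵐ x ∂ν, (c * g x / f x) ^ β = c ^ β * (g x / f x) ^ β := by
    filter_upwards [hfg] with x ⟨hf, hfg⟩
    rw [mul_div_assoc, Real.mul_rpow hc (div_nonneg (hf.le.trans hfg) hf.le)]
  refine le_average_of_ae_le ((hint.const_mul _).congr (hsplit.mono fun _ h => h.symm)) ?_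
  filter_upwards [hfg] with x ⟨hf, hfg⟩
  gcongr
  rw [mul_div_assoc]
  exact le_mul_of_one_le_right hc ((one_le_div hf).2 hfg)

end Average

theorem setAverage_Icc_eq {a b : ℝ} (hab : a ≤ b) (f : ℝ → ℝ) :
    ⨍ x in Set.Icc a b, f x = (b - a)⁻¹ * ∫ x in Set.Icc a b, f x := by
  rw [setAverage_eq, Real.volume_real_Icc_of_le hab, smul_eq_mul]

theorem mul_rpow_mul_rpow_div {x y z : ℝ} (hx : 0 ≤ x) (hy : 0 ≤ y) (hz : 0 ≤ z) {p : ℝ}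
    (hp : p ≠ 0) (q : ℝ) : ((x * y) ^ p * z) ^ (q / p) = x ^ q * z ^ (q / p) * y ^ q := by
  rw [Real.mul_rpow (by positivity) hz, ← Real.rpow_mul (by positivity), mul_div_cancel₀ q hp,
    Real.mul_rpow hx hy]
  ring

theorem inv_rpow_mul_mul_rpow_le_rpow {c u p q : ℝ} (hu : 0 < u) (h : 1 ≤ c * u)
    (hpq : p ≤ q) : u⁻¹ ^ q * (c * u) ^ p ≤ c ^ q :=
  calc u⁻¹ ^ q * (c * u) ^ p ≤ u⁻¹ ^ q * (c * u) ^ q := by gcongr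
    _ = c ^ q := by
        rw [← Real.mul_rpow (by positivity) (by positivity), mul_comm c,
          inv_mul_cancel_left₀ hu.ne']

theorem good_bad_average_inequality_general
    (T L R c lam : ℝ) (hT : 0 < T) (hL : 0 < L) (hR : 0 < R) (hc : 0 < c)
    (μ α : ℝ) (hμ0 : 0 < μ) (hμ1 : μ < 1) (hα : α = 1 - μ)
    (f g : ℝ → ℝ)
    (hfg : ∀ᵐ t ∂(volume.restrict (Set.Icc 0 T)), 1 / L ≤ f t ∧ f t ≤ g t)
    (hint_f : IntegrableOn f (Set.Icc 0 T))
    (hint_fα : IntegrableOn (fun t => f t ^ α) (Set.Icc 0 T))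
    (hint_r : IntegrableOn (fun t => (g t / f t) ^ (α / μ)) (Set.Icc 0 T))
    (havg : (1 / T) * ∫ t in Set.Icc 0 T, f t ≤ c * L⁻¹ * R ^ lam) :
    (1 / T) * ∫ t in Set.Icc 0 T, (c * g t / f t) ^ ((1 - μ) / μ) ≥
      (1 / T) * ∫ t in Set.Icc 0 T, ((L * f t) ^ μ * R ^ (-lam)) ^ ((1 - μ) / μ) := by
  subst hα
  have : NeZero (volume.restrict (Set.Icc 0 T)) := ⟨by simp [hT]⟩
  have hav (h : ℝ → ℝ) :
      (1 / T) * ∫ t in Set.Icc 0 T, h t = ⨍ t in Set.Icc 0 T, h t := by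
    rw [setAverage_Icc_eq hT.le, sub_zero, one_div]
  simp only [hav] at havg ⊢
  have hf_pos : ∀ᵐ t ∂(volume.restrict (Set.Icc 0 T)), 0 < f t :=
    hfg.mono fun t ht => (one_div_pos.2 hL).trans_le ht.1
  have hf_nonneg := hf_pos.mono fun _ ht => ht.le
  have hcR : 1 ≤ c * R ^ lam := by
    have := (le_average_of_ae_le hint_f (hfg.mono fun _ ht => ht.1)).trans havg
    rwa [one_div, mul_right_comm, le_mul_iff_one_le_left (inv_pos.2 hL)] at this
  have hβ : 1 - μ ≤ (1 - μ) / μ := le_div_self (by linarith) hμ0 hμ1.le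
  calc ⨍ t in Set.Icc 0 T, ((L * f t) ^ μ * R ^ (-lam)) ^ ((1 - μ) / μ)
      = L ^ (1 - μ) * (R ^ (-lam)) ^ ((1 - μ) / μ) * ⨍ t in Set.Icc 0 T, f t ^ (1 - μ) := by
        rw [← average_const_mul]
        exact average_congr (hf_nonneg.mono fun t ht =>
          mul_rpow_mul_rpow_div hL.le ht (by positivity) hμ0.ne' _)
    _ ≤ L ^ (1 - μ) * (R ^ (-lam)) ^ ((1 - μ) / μ) * (c * L⁻¹ * R ^ lam) ^ (1 - μ) := by
        gcongr
        exact (average_rpow_le_rpow_average (by linarith) (by linarith) hf_nonneg hint_f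
          hint_fα).trans
          (Real.rpow_le_rpow (le_average_of_ae_le hint_f hf_nonneg) havg (by linarith))
    _ = (R ^ lam)⁻¹ ^ ((1 - μ) / μ) * (c * R ^ lam) ^ (1 - μ) := by
        rw [Real.rpow_neg hR.le, mul_right_comm, ← Real.mul_rpow hL.le (by positivity)]
        field_simp
    _ ≤ c ^ ((1 - μ) / μ) := inv_rpow_mul_mul_rpow_le_rpow (by positivity) hcR hβ
    _ ≤ ⨍ t in Set.Icc 0 T, (c * g t / f t) ^ ((1 - μ) / μ) :=
        rpow_le_average_mul_div_rpow hc.le (hβ.trans' (by linarith))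
          ((hf_pos.and hfg).mono fun _ h => ⟨h.1, h.2.2⟩) hint_r

/-- the abstract content of Theorem 4.1 of the paper: if
`1/L ≤ f ≤ g` a.e. on `[0,T]` and the average of `f` is at most `c L⁻¹ R^λ`, then
the average of `(c g/f)^((1-μ)/μ)` dominates the average of `((L f)^μ R^(-λ))^((1-μ)/μ)`. -/
theorem good_bad_average_inequality
    (T L R c lam : ℝ) (hT : 0 < T) (hL : 0 < L) (hR : 0 < R) (hc : 0 < c)
    (μ α : ℝ) (hμ0 : 0 < μ) (hμ1 : μ < 1) (hα : α = 1 - μ)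
    (f g : ℝ → ℝ) (hfm : Measurable f) (hgm : Measurable g)
    (hfg : ∀ᵐ t ∂(volume.restrict (Set.Icc 0 T)), 1 / L ≤ f t ∧ f t ≤ g t)
    (hint_f : IntegrableOn f (Set.Icc 0 T))
    (hint_fα : IntegrableOn (fun t => f t ^ α) (Set.Icc 0 T))
    (hint_r : IntegrableOn (fun t => (g t / f t) ^ (α / μ)) (Set.Icc 0 T))
    (havg : (1 / T) * ∫ t in Set.Icc 0 T, f t ≤ c * L⁻¹ * R ^ lam) :
    (1 / T) * ∫ t in Set.Icc 0 T, (c * g t / f t) ^ ((1 - μ) / μ) ≥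
      (1 / T) * ∫ t in Set.Icc 0 T, ((L * f t) ^ μ * R ^ (-lam)) ^ ((1 - μ) / μ) :=
  good_bad_average_inequality_general T L R c lam hT hL hR hc μ α hμ0 hμ1 hα f g hfg hint_f hint_fα
    hint_r havg
end

section
/- Let T > 0, L > 0, R > 0, c > 0, λ ∈ ℝ, 0 < μ < 1, and set α = 1 − μ. Let f, g : [0,T] → ℝ be measurable with 1/L ≤ f(t) ≤ g(t) for almost every t ∈ [0,T]; assume f, f^α, (g/f)^{α/μ} and ((L f)^μ R^{−λ})^{α/μ} are integrable on [0,T], and assume (1/T)∫₀ᵀ f ≤ c·L^{−1}·R^{λ}. Then the set {t ∈ [0,T] : c·g(t)/f(t) ≥ (L·f(t))^{μ}·R^{−λ}} has positive Lebesgue measure. -/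
/-!
By the first moment method, `f` lies below its mean on `[0,T]`, hence below `c L⁻¹ R^λ`, on a set
of positive measure. At such a time `L f ≤ c R^λ`; since `L f ≥ 1` and `μ ≤ 1` we get
`(L f)^μ ≤ L f ≤ c R^λ`, and `g ≥ f` gives `c ≤ c g / f`.
-/

open MeasureTheory Set

theorem rpow_mul_rpow_neg_le_mul_div {L R c lam μ y z : ℝ} (hL : 0 < L) (hR : 0 < R)
    (hμ : μ ≤ 1) (hy : 1 / L ≤ y) (hyz : y ≤ z) (hyc : y ≤ c * L⁻¹ * R ^ lam) :
    (L * y) ^ μ * R ^ (-lam) ≤ c * z / y := by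
  have hLy : 1 ≤ L * y := by rwa [one_div, inv_le_iff_one_le_mul₀' hL] at hy
  have hy0 : 0 < y := (one_div_pos.mpr hL).trans_le hy
  have hRlam : 0 < R ^ lam := Real.rpow_pos_of_pos hR lam
  have hLyc : L * y ≤ c * R ^ lam := by
    calc L * y ≤ L * (c * L⁻¹ * R ^ lam) := by gcongr
      _ = c * R ^ lam := by field_simp
  have hc : 0 ≤ c := (pos_of_mul_pos_left (zero_lt_one.trans_le (hLy.trans hLyc)) hRlam.le).le
  calc (L * y) ^ μ * R ^ (-lam) ≤ (L * y) * R ^ (-lam) := by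
        gcongr
        simpa using Real.rpow_le_rpow_of_exponent_le hLy hμ
    _ ≤ c * R ^ lam * R ^ (-lam) := by gcongr
    _ = c := by rw [mul_assoc, ← Real.rpow_add hR, add_neg_cancel, Real.rpow_zero, mul_one]
    _ ≤ c * (z / y) := le_mul_of_one_le_right hc ((one_le_div hy0).mpr hyz)
    _ = c * z / y := mul_div_assoc' c z y

theorem measure_sep_pos_of_ae_imp {α : Type*} [MeasurableSpace α] {μ : Measure α} {s : Set α}
    {p q : α → Prop} (hs : NullMeasurableSet s μ) (hpq : ∀ᵐ x ∂μ.restrict s, p x → q x)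
    (hp : 0 < μ {x ∈ s | p x}) : 0 < μ {x ∈ s | q x} := by
  refine hp.trans_le (measure_mono_ae ?_)
  filter_upwards [(ae_restrict_iff'₀ hs).mp hpq] with x hx ⟨hxs, hpx⟩
  exact ⟨hxs, hx hxs hpx⟩

theorem setAverage_Icc_zero_eq {T : ℝ} (hT : 0 ≤ T) (f : ℝ → ℝ) :
    ⨍ t in Icc 0 T, f t = (1 / T) * ∫ t in Icc 0 T, f t := by
  rw [setAverage_eq, Real.volume_real_Icc_of_le hT, sub_zero, smul_eq_mul, one_div]

theorem good_times_have_positive_measure_general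
    (T L R c lam : ℝ) (hT : 0 < T) (hL : 0 < L) (hR : 0 < R)
    (μ : ℝ) (hμ1 : μ < 1)
    (f g : ℝ → ℝ)
    (hfg : ∀ᵐ t ∂(volume.restrict (Set.Icc 0 T)), 1 / L ≤ f t ∧ f t ≤ g t)
    (hint_f : IntegrableOn f (Set.Icc 0 T))
    (havg : (1 / T) * ∫ t in Set.Icc 0 T, f t ≤ c * L⁻¹ * R ^ lam) :
    0 < volume {t ∈ Set.Icc 0 T | (L * f t) ^ μ * R ^ (-lam) ≤ c * g t / f t} := by
  have hvol : volume (Icc 0 T) ≠ 0 := by simpa using hT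
  have hbelow_mean : 0 < volume {t ∈ Icc 0 T | f t ≤ ⨍ s in Icc 0 T, f s} :=
    measure_le_setAverage_pos hvol measure_Icc_lt_top.ne hint_f
  rw [setAverage_Icc_zero_eq hT.le] at hbelow_mean
  refine measure_sep_pos_of_ae_imp measurableSet_Icc.nullMeasurableSet ?_ hbelow_mean
  filter_upwards [hfg] with t ⟨hft, hfgt⟩ hmean
  exact rpow_mul_rpow_neg_le_mul_div hL hR hμ1.le hft hfgt (hmean.trans havg)

/-- existence of `good intervals`: under the hypotheses of Theorem 4.1
of the paper, the set of times in `[0,T]` where `c·g/f ≥ (L f)^μ R^(-λ)` has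
positive Lebesgue measure. -/
theorem good_times_have_positive_measure
    (T L R c lam : ℝ) (hT : 0 < T) (hL : 0 < L) (hR : 0 < R) (hc : 0 < c)
    (μ α : ℝ) (hμ0 : 0 < μ) (hμ1 : μ < 1) (hα : α = 1 - μ)
    (f g : ℝ → ℝ) (hfm : Measurable f) (hgm : Measurable g)
    (hfg : ∀ᵐ t ∂(volume.restrict (Set.Icc 0 T)), 1 / L ≤ f t ∧ f t ≤ g t)
    (hint_f : IntegrableOn f (Set.Icc 0 T))
    (hint_fα : IntegrableOn (fun t => f t ^ α) (Set.Icc 0 T))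
    (hint_r : IntegrableOn (fun t => (g t / f t) ^ (α / μ)) (Set.Icc 0 T))
    (hint_l : IntegrableOn (fun t => ((L * f t) ^ μ * R ^ (-lam)) ^ (α / μ)) (Set.Icc 0 T))
    (havg : (1 / T) * ∫ t in Set.Icc 0 T, f t ≤ c * L⁻¹ * R ^ lam) :
    0 < volume {t ∈ Set.Icc 0 T | (L * f t) ^ μ * R ^ (-lam) ≤ c * g t / f t} :=
  good_times_have_positive_measure_general T L R c lam hT hL hR μ hμ1 f g hfg hint_f havg
end

section
/- Let ν > 0, ρ > 0, Φ ≥ 0, M ≥ 0 and t₀ ≤ t₁. Suppose H₀ : ℝ → ℝ is continuously differentiable on [t₀,t₁] with 0 ≤ H₀(s) ≤ M for all s ∈ [t₀,t₁], H₁ : ℝ → ℝ is continuous and nonnegative on [t₀,t₁], and for all s ∈ [t₀,t₁] one has (1/2)·H₀'(s) ≤ −ν·H₁(s) + √(H₀(s))·Φ. Then ν·∫_{t₀}^{t₁} e^{ρ(s−t₀)}·H₁(s) ds ≤ M/2 + ((e^{ρ(t₁−t₀)} − 1)/ρ)·(ρM/2 + √M·Φ). -/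
/-!
Multiply Leray's inequality by the weight `w s = e^{ρ(s-t₀)}`. Since `(w H₀)' = ρ w H₀ + w H₀'`
and `H₀ ≤ M`, this gives `ν w H₁ ≤ (ρM/2 + √M Φ) w - (w H₀)'/2`. Integrating, the derivative
term contributes `(H₀ t₀ - w t₁ H₀ t₁)/2 ≤ M/2`, and `∫ w = (e^{ρ(t₁-t₀)} - 1)/ρ`.
-/

open MeasureTheory intervalIntegral Real Set

theorem integral_exp_mul_sub {ρ : ℝ} (hρ : ρ ≠ 0) (a b c : ℝ) :
    ∫ s in a..b, exp (ρ * (s - c)) = (exp (ρ * (b - c)) - exp (ρ * (a - c))) / ρ := by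
  simp_rw [mul_sub]
  rw [integral_comp_mul_sub (fun s => exp s) hρ, integral_exp, smul_eq_mul, inv_mul_eq_div]

theorem weighted_leray_pointwise {ν ρ Φ M w h₀ h₀' h₁ : ℝ} (hρ : 0 ≤ ρ) (hΦ : 0 ≤ Φ)
    (hw : 0 ≤ w) (h₀_le : h₀ ≤ M)
    (hineq : 1 / 2 * h₀' ≤ -ν * h₁ + √h₀ * Φ) :
    ν * (w * h₁) ≤ (ρ * M / 2 + √M * Φ) * w - 1 / 2 * (ρ * w * h₀ + w * h₀') := by
  have hsqrt : √h₀ * Φ ≤ √M * Φ := mul_le_mul_of_nonneg_right (sqrt_le_sqrt h₀_le) hΦ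
  have hρh₀ : ρ * h₀ ≤ ρ * M := mul_le_mul_of_nonneg_left h₀_le hρ
  have key : ν * h₁ ≤ ρ * M / 2 + √M * Φ - 1 / 2 * (ρ * h₀ + h₀') := by linarith
  nlinarith [mul_le_mul_of_nonneg_left key hw]

theorem weighted_enstrophy_integral_bound_general
    (ν ρ Φ M t₀ t₁ : ℝ) (hρ : 0 < ρ) (hΦ : 0 ≤ Φ)
    (ht : t₀ ≤ t₁) (H₀ H₀' H₁ : ℝ → ℝ)
    (hderiv : ∀ s ∈ Set.Icc t₀ t₁, HasDerivWithinAt H₀ (H₀' s) (Set.Icc t₀ t₁) s)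
    (hderiv_cont : ContinuousOn H₀' (Set.Icc t₀ t₁))
    (hH₀ : ∀ s ∈ Set.Icc t₀ t₁, 0 ≤ H₀ s ∧ H₀ s ≤ M)
    (hH₁cont : ContinuousOn H₁ (Set.Icc t₀ t₁))
    (hineq : ∀ s ∈ Set.Icc t₀ t₁,
      (1 / 2) * H₀' s ≤ -ν * H₁ s + Real.sqrt (H₀ s) * Φ) :
    ν * ∫ s in t₀..t₁, Real.exp (ρ * (s - t₀)) * H₁ s ≤
      M / 2 + ((Real.exp (ρ * (t₁ - t₀)) - 1) / ρ) * (ρ * M / 2 + Real.sqrt M * Φ) := by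
  set w : ℝ → ℝ := fun s => exp (ρ * (s - t₀))
  set C := ρ * M / 2 + √M * Φ
  have hw_deriv (s : ℝ) : HasDerivAt w (ρ * w s) s := by
    simpa [w, mul_comm] using (((hasDerivAt_id s).sub_const t₀).const_mul ρ).exp
  have hw_cont : Continuous w := by fun_prop
  have hH₀_cont : ContinuousOn H₀ (Icc t₀ t₁) := fun s hs => (hderiv s hs).continuousWithinAt
  have hprod_int : IntervalIntegrable (fun s => ρ * w s * H₀ s + w s * H₀' s) volume t₀ t₁ :=
    ContinuousOn.intervalIntegrable_of_Icc ht (by fun_prop)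
  have hprod : ∫ s in t₀..t₁, ρ * w s * H₀ s + w s * H₀' s = w t₁ * H₀ t₁ - w t₀ * H₀ t₀ :=
    integral_deriv_mul_eq_sub_of_hasDerivWithinAt (fun s _ => (hw_deriv s).hasDerivWithinAt)
      (by rwa [uIcc_of_le ht]) ((continuous_const.mul hw_cont).intervalIntegrable _ _)
      (hderiv_cont.intervalIntegrable_of_Icc ht)
  have hCw_int : IntervalIntegrable (fun s => C * w s) volume t₀ t₁ :=
    (hw_cont.intervalIntegrable _ _).const_mul C
  have hmono := integral_mono_on ht (ContinuousOn.intervalIntegrable_of_Icc ht (by fun_prop))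
    (hCw_int.sub (hprod_int.const_mul (1 / 2))) fun s hs =>
    weighted_leray_pointwise hρ.le hΦ (exp_pos _).le (hH₀ s hs).2 (hineq s hs)
  simp only [intervalIntegral.integral_const_mul] at hmono
  rw [intervalIntegral.integral_sub hCw_int (hprod_int.const_mul _),
    intervalIntegral.integral_const_mul, intervalIntegral.integral_const_mul, hprod,
    integral_exp_mul_sub hρ.ne'] at hmono
  have hw_end : 0 ≤ w t₁ * H₀ t₁ := mul_nonneg (exp_pos _).le (hH₀ t₁ ⟨ht, le_rfl⟩).1
  have hH₀_start : H₀ t₀ ≤ M := (hH₀ t₀ ⟨le_rfl, ht⟩).2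
  simp only [w, sub_self, mul_zero, exp_zero, one_mul] at hmono hw_end ⊢
  linarith

/-- the exponentially weighted time integral of the enstrophy:
if the energy `H₀` satisfies Leray's energy inequality and is bounded by `M`, then
`ν ∫ e^{ρ(s-t₀)} H₁ ≤ M/2 + ((e^{ρ(t₁-t₀)} - 1)/ρ)(ρM/2 + √M Φ)`. -/
theorem weighted_enstrophy_integral_bound
    (ν ρ Φ M t₀ t₁ : ℝ) (hν : 0 < ν) (hρ : 0 < ρ) (hΦ : 0 ≤ Φ) (hM : 0 ≤ M)
    (ht : t₀ ≤ t₁) (H₀ H₀' H₁ : ℝ → ℝ)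
    (hderiv : ∀ s ∈ Set.Icc t₀ t₁, HasDerivWithinAt H₀ (H₀' s) (Set.Icc t₀ t₁) s)
    (hderiv_cont : ContinuousOn H₀' (Set.Icc t₀ t₁))
    (hH₀ : ∀ s ∈ Set.Icc t₀ t₁, 0 ≤ H₀ s ∧ H₀ s ≤ M)
    (hH₁cont : ContinuousOn H₁ (Set.Icc t₀ t₁))
    (hH₁ : ∀ s ∈ Set.Icc t₀ t₁, 0 ≤ H₁ s)
    (hineq : ∀ s ∈ Set.Icc t₀ t₁,
      (1 / 2) * H₀' s ≤ -ν * H₁ s + Real.sqrt (H₀ s) * Φ) :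
    ν * ∫ s in t₀..t₁, Real.exp (ρ * (s - t₀)) * H₁ s ≤
      M / 2 + ((Real.exp (ρ * (t₁ - t₀)) - 1) / ρ) * (ρ * M / 2 + Real.sqrt M * Φ) :=
  weighted_enstrophy_integral_bound_general ν ρ Φ M t₀ t₁ hρ hΦ ht H₀ H₀' H₁ hderiv hderiv_cont hH₀
    hH₁cont hineq
end

section
/- Let μ > 0, L > 0, R > 0, and natural numbers n, p. Let κ : ℕ → ℝ, c : ℕ → ℝ, λ : ℕ → ℝ be such that κ_i > 0 and c_i > 0 for all i, and κ_i ≤ κ_{i+1} for all i with n ≤ i ≤ n+p+1. Assume that for every i with n ≤ i ≤ n+p+1 one has c_i·(κ_{i+1}/κ_i) < (L·κ_i)^μ·R^{−λ_i}. Then (L·κ_n)^{(1+μ)^{p+1}} > (c_{n+p+1}·R^{λ_{n+p+1}})^{1/μ} · ∏_{i=0}^{p} (c_{n+i}·R^{λ_{n+i}})^{(1+μ)^{p−i}}. -/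
/-!
Put `x_i = L κ_i` and `a_i = c_i R^{λ_i}`. Multiplying the bad-interval inequality at `i` by
`R^{λ_i} x_i` turns it into `a_i x_{i+1} < x_i^{1+μ}`. Raising the bound for `x_{n+k+1}` obtained
from the indices `n, …, n+k` to the power `1+μ` and inserting the inequality at `n+k+1` gives,
by induction, `(∏_{i ≤ p} a_{n+i}^{(1+μ)^{p-i}}) x_{n+p+1} < x_n^{(1+μ)^{p+1}}`. At the last
index `m = n+p+1`, `κ_{m+1} ≥ κ_m` turns the inequality into `a_m < x_m^μ`, i.e. `a_m^{1/μ} < x_m`.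
-/

open Finset Real

lemma mul_rpow_mul_lt_rpow_one_add {μ L R c lam κ κ' : ℝ} (hL : 0 < L) (hR : 0 < R) (hκ : 0 < κ)
    (hbad : c * (κ' / κ) < (L * κ) ^ μ * R ^ (-lam)) :
    c * R ^ lam * (L * κ') < (L * κ) ^ (1 + μ) := by
  have hx : 0 < L * κ := mul_pos hL hκ
  have hscale : 0 < R ^ lam * (L * κ) := mul_pos (rpow_pos_of_pos hR lam) hx
  calc c * R ^ lam * (L * κ') = c * (κ' / κ) * (R ^ lam * (L * κ)) := by
        field_simp
    _ < (L * κ) ^ μ * R ^ (-lam) * (R ^ lam * (L * κ)) := mul_lt_mul_of_pos_right hbad hscale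
    _ = (L * κ) ^ (1 + μ) := by
        rw [rpow_add hx, rpow_one, rpow_neg hR.le]
        field_simp

lemma rpow_one_div_lt_of_mul_lt_rpow_one_add {μ a x y : ℝ} (hμ : 0 < μ) (ha : 0 ≤ a)
    (hx : 0 < x) (hxy : x ≤ y) (h : a * y < x ^ (1 + μ)) :
    a ^ (1 / μ) < x := by
  have hax : a * x < x ^ μ * x := by
    calc a * x ≤ a * y := mul_le_mul_of_nonneg_left hxy ha
      _ < x ^ (1 + μ) := h
      _ = x ^ μ * x := by rw [add_comm, rpow_add hx, rpow_one]
  rw [one_div, rpow_inv_lt_iff_of_pos ha hx.le hμ]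
  exact lt_of_mul_lt_mul_right hax hx.le

lemma prod_rpow_pow_rpow {r : ℝ} {a : ℕ → ℝ} (ha : ∀ i, 0 ≤ a i) (k : ℕ) :
    (∏ i ∈ range (k + 1), a i ^ (r ^ (k - i))) ^ r =
      ∏ i ∈ range (k + 1), a i ^ (r ^ (k + 1 - i)) := by
  rw [← finsetProd_rpow _ _ fun i _ => rpow_nonneg (ha i) _]
  refine prod_congr rfl fun i hi => ?_
  rw [← rpow_mul (ha i), ← pow_succ, Nat.sub_add_comm (mem_range_succ_iff.mp hi)]

theorem prod_rpow_mul_lt_rpow_pow {r : ℝ} (hr : 0 < r) {a x : ℕ → ℝ} (ha : ∀ i, 0 ≤ a i)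
    (hx : ∀ i, 0 ≤ x i) {k : ℕ} (h : ∀ i ≤ k, a i * x (i + 1) < x i ^ r) :
    (∏ i ∈ range (k + 1), a i ^ (r ^ (k - i))) * x (k + 1) < x 0 ^ (r ^ (k + 1)) := by
  induction k with
  | zero => simpa using h 0 le_rfl
  | succ k ih =>
    set P := ∏ i ∈ range (k + 1), a i ^ (r ^ (k - i))
    have hP : 0 ≤ P := prod_nonneg fun i _ => rpow_nonneg (ha i) _
    have hprev : P * x (k + 1) < x 0 ^ (r ^ (k + 1)) := ih fun i hi => h i (by omega)
    calc (∏ i ∈ range (k + 1 + 1), a i ^ (r ^ (k + 1 - i))) * x (k + 1 + 1)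
        = P ^ r * (a (k + 1) * x (k + 1 + 1)) := by
          rw [prod_range_succ, prod_rpow_pow_rpow ha, Nat.sub_self, pow_zero, rpow_one, mul_assoc]
      _ ≤ P ^ r * x (k + 1) ^ r :=
          mul_le_mul_of_nonneg_left (h (k + 1) le_rfl).le (rpow_nonneg hP r)
      _ = (P * x (k + 1)) ^ r := (mul_rpow hP (hx _)).symm
      _ < (x 0 ^ (r ^ (k + 1))) ^ r := rpow_lt_rpow (mul_nonneg hP (hx _)) hprev hr
      _ = x 0 ^ (r ^ (k + 1 + 1)) := by rw [← rpow_mul (hx 0), ← pow_succ]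

/-- the lower bound on `L κ_n` on the intersection of bad intervals:
if the bad-interval inequality `c_i (κ_{i+1}/κ_i) < (L κ_i)^μ R^{-λ_i}` holds for
all `i` with `n ≤ i ≤ n+p+1`, then
`(L κ_n)^{(1+μ)^{p+1}} > (c_{n+p+1} R^{λ_{n+p+1}})^{1/μ} ∏_{i=0}^{p} (c_{n+i} R^{λ_{n+i}})^{(1+μ)^{p-i}}`. -/
theorem bad_interval_intersection_lower_bound
    (μ L R : ℝ) (hμ : 0 < μ) (hL : 0 < L) (hR : 0 < R)
    (n p : ℕ) (κ c lam : ℕ → ℝ)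
    (hκpos : ∀ i, 0 < κ i) (hcpos : ∀ i, 0 < c i)
    (hmono : ∀ i, n ≤ i → i ≤ n + p + 1 → κ i ≤ κ (i + 1))
    (hbad : ∀ i, n ≤ i → i ≤ n + p + 1 →
      c i * (κ (i + 1) / κ i) < (L * κ i) ^ μ * R ^ (-(lam i))) :
    (L * κ n) ^ ((1 + μ) ^ (p + 1)) >
      (c (n + p + 1) * R ^ lam (n + p + 1)) ^ (1 / μ) *
        ∏ i ∈ Finset.range (p + 1), (c (n + i) * R ^ lam (n + i)) ^ ((1 + μ) ^ (p - i)) := by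
  have ha : ∀ i, 0 ≤ c i * R ^ lam i := fun i => (mul_pos (hcpos i) (rpow_pos_of_pos hR _)).le
  have hstep : ∀ i, n ≤ i → i ≤ n + p + 1 →
      c i * R ^ lam i * (L * κ (i + 1)) < (L * κ i) ^ (1 + μ) := fun i hi hi' =>
    mul_rpow_mul_lt_rpow_one_add hL hR (hκpos i) (hbad i hi hi')
  have hchain := prod_rpow_mul_lt_rpow_pow (by linarith) (fun i => ha (n + i))
    (fun i => (mul_pos hL (hκpos (n + i))).le) (k := p)
    fun i hi => hstep (n + i) (by omega) (by omega)
  have hlast : (c (n + p + 1) * R ^ lam (n + p + 1)) ^ (1 / μ) < L * κ (n + p + 1) :=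
    rpow_one_div_lt_of_mul_lt_rpow_one_add hμ (ha _) (mul_pos hL (hκpos _))
      (mul_le_mul_of_nonneg_left (hmono _ (by omega) le_rfl) hL.le) (hstep _ (by omega) le_rfl)
  have hprod : 0 ≤ ∏ i ∈ range (p + 1), (c (n + i) * R ^ lam (n + i)) ^ ((1 + μ) ^ (p - i)) :=
    prod_nonneg fun i _ => rpow_nonneg (ha _) _
  simp only [add_zero] at hchain
  calc _ ≤ L * κ (n + p + 1) *
        ∏ i ∈ range (p + 1), (c (n + i) * R ^ lam (n + i)) ^ ((1 + μ) ^ (p - i)) :=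
        mul_le_mul_of_nonneg_right hlast.le hprod
    _ < _ := by rw [mul_comm]; exact hchain
end

section
/- Let ν, ℓ, τ > 0 and Φ ≥ 0, and set g = −ν/ℓ² + √(ν²/ℓ⁴ + τ^{−2}) (note g > 0). Suppose H₀ : ℝ → ℝ is differentiable and nonnegative on an interval I, H₁ : ℝ → ℝ is nonnegative on I, and for all t ∈ I one has (1/2)·H₀'(t) ≤ −ν·H₁(t) + √(H₀(t))·Φ. Define F₀ = H₀ + τ²·Φ² and F₁ = H₁ + τ²·Φ²/ℓ². Then for all t ∈ I, (1/2)·F₀'(t) ≤ −ν·F₁(t) + (1/(2gτ²))·F₀(t). -/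
/-- Step 1 of Proposition 3.1 of the paper: Leray's energy inequality
`(1/2)H₀' ≤ -ν H₁ + √H₀ Φ` implies the `F₀`-ladder inequality
`(1/2)F₀' ≤ -ν F₁ + (1/(2gτ²)) F₀` where `F₀ = H₀ + τ²Φ²`, `F₁ = H₁ + τ²Φ²/ℓ²`
and `g = -ν/ℓ² + √(ν²/ℓ⁴ + τ⁻²)` (note `g > 0`). -/
theorem leray_to_F0_ladder
    (ν ℓ τ Φ : ℝ) (hν : 0 < ν) (hℓ : 0 < ℓ) (hτ : 0 < τ) (hΦ : 0 ≤ Φ)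
    (g : ℝ) (hg : g = -ν / ℓ ^ 2 + Real.sqrt (ν ^ 2 / ℓ ^ 4 + (τ ^ 2)⁻¹))
    (I : Set ℝ) (H₀ H₀' H₁ : ℝ → ℝ)
    (hderiv : ∀ t ∈ I, HasDerivAt H₀ (H₀' t) t)
    (hH₀ : ∀ t ∈ I, 0 ≤ H₀ t) (hH₁ : ∀ t ∈ I, 0 ≤ H₁ t)
    (hineq : ∀ t ∈ I, (1 / 2) * H₀' t ≤ -ν * H₁ t + Real.sqrt (H₀ t) * Φ)
    (F₀ F₁ : ℝ → ℝ)
    (hF₀ : ∀ t, F₀ t = H₀ t + τ ^ 2 * Φ ^ 2)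
    (hF₁ : ∀ t, F₁ t = H₁ t + τ ^ 2 * Φ ^ 2 / ℓ ^ 2) :
    0 < g ∧ ∀ t ∈ I, (1 / 2) * H₀' t ≤ -ν * F₁ t + (1 / (2 * g * τ ^ 2)) * F₀ t := by
  set b : ℝ := ν / ℓ ^ 2 with hbdef
  have hb : 0 < b := div_pos hν (pow_pos hℓ 2)
  have hsq : ν ^ 2 / ℓ ^ 4 + (τ ^ 2)⁻¹ = b ^ 2 + (τ ^ 2)⁻¹ := by
    rw [hbdef]; field_simp
  have hτ2 : 0 < (τ ^ 2)⁻¹ := by positivity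
  have hsum : (0:ℝ) ≤ b ^ 2 + (τ ^ 2)⁻¹ := by positivity
  have hgb : g + b = Real.sqrt (b ^ 2 + (τ ^ 2)⁻¹) := by
    rw [hg, hsq, hbdef]; ring
  have hgpos : 0 < g := by
    have hlt : b < Real.sqrt (b ^ 2 + (τ ^ 2)⁻¹) :=
      (Real.lt_sqrt hb.le).mpr (by linarith)
    linarith [hgb ▸ hlt]
  refine ⟨hgpos, ?_⟩
  have hkey : g * (g + 2 * b) * τ ^ 2 = 1 := by
    have h2 : (g + b) ^ 2 = b ^ 2 + (τ ^ 2)⁻¹ := by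
      rw [hgb, Real.sq_sqrt hsum]
    have hτ0 : (τ:ℝ) ^ 2 ≠ 0 := by positivity
    field_simp at h2
    nlinarith [h2]
  have hc : 1 / (2 * g * τ ^ 2) = (g + 2 * b) / 2 := by
    rw [div_eq_div_iff (by positivity) (by norm_num)]
    linear_combination -2 * hkey
  intro t ht
  have h1 := hineq t ht
  set s : ℝ := Real.sqrt (H₀ t) with hsdef
  have hs0 : 0 ≤ s := Real.sqrt_nonneg _
  have hs2 : s ^ 2 = H₀ t := Real.sq_sqrt (hH₀ t ht)
  have hy : (2 * (g + 2 * b)) * (s * Φ) ≤ (g + 2 * b) ^ 2 * H₀ t + Φ ^ 2 := by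
    nlinarith [sq_nonneg ((g + 2 * b) * s - Φ), hs2]
  have key2 : (g * (g + 2 * b) * τ ^ 2 - 1) * Φ ^ 2 = 0 := by
    rw [hkey]; ring
  have hstep : s * Φ ≤ -(b * (τ ^ 2 * Φ ^ 2))
      + ((g + 2 * b) / 2) * (H₀ t + τ ^ 2 * Φ ^ 2) := by
    have h2 : (2 * (g + 2 * b)) * (s * Φ) ≤
        (2 * (g + 2 * b)) * (-(b * (τ ^ 2 * Φ ^ 2))
          + ((g + 2 * b) / 2) * (H₀ t + τ ^ 2 * Φ ^ 2)) := by
      linarith [hy, key2]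
    exact le_of_mul_le_mul_left h2 (by positivity)
  have hE : ν * (τ ^ 2 * Φ ^ 2 / ℓ ^ 2) = b * (τ ^ 2 * Φ ^ 2) := by
    rw [hbdef]; field_simp
  rw [hF₀, hF₁, hc]
  linarith [h1, hstep, hE]
end
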